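/- arXiv:1602.05386 — 2 statements merged into one kernel-verified Lean document; each statement's English description precedes it below -/
import Mathlib

section
/- Let k ≥ 3 and n ≥ m ≥ 2 be integers and suppose that R(C^k_n, C^k_m) = (k−1)n + ⌊(m−1)/2⌋. Then R(P^k_n, C^k_m) = (k−1)n + ⌊(m+1)/2⌋ and R(P^k_n, P^k_{m−1}) = (k−1)n + ⌊m/2⌋. Moreover, if n = m then R(P^k_n, P^k_n) = (k−1)n + ⌊(n+1)/2⌋. -/
open Finset

/-- The `i`-th edge (0-indexed) of a `k`-uniform loose path embedded via `f`. -/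
def pathEdge (k : ℕ) {V : Type} [DecidableEq V] (f : ℕ → V) (i : ℕ) : Finset V :=
  (Finset.range k).image fun j => f (i * (k - 1) + j)

/-- The `i`-th edge (0-indexed) of a `k`-uniform loose cycle of length `n` embedded via `f`. -/
def cycleEdge (k n : ℕ) {V : Type} [DecidableEq V] (f : ℕ → V) (i : ℕ) : Finset V :=
  (Finset.range k).image fun j => f ((i * (k - 1) + j) % (n * (k - 1)))

/-- There is a copy of the loose path `P^k_n` all of whose edges have color `b`. -/
def hasPath (k n : ℕ) {V : Type} [DecidableEq V] (col : Finset V → Bool) (b : Bool) : Prop :=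
  ∃ f : ℕ → V, Set.InjOn f (Set.Iio (n * (k - 1) + 1)) ∧
    ∀ i < n, col (pathEdge k f i) = b

/-- There is a copy of the loose cycle `C^k_n` all of whose edges have color `b`. -/
def hasCycle (k n : ℕ) {V : Type} [DecidableEq V] (col : Finset V → Bool) (b : Bool) : Prop :=
  ∃ f : ℕ → V, Set.InjOn f (Set.Iio (n * (k - 1))) ∧
    ∀ i < n, col (cycleEdge k n f i) = b

/-- Ramsey number `R(P^k_n, P^k_m)` (red = `true`, blue = `false`). -/
noncomputable def ramseyPP (k n m : ℕ) : ℕ :=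
  sInf {N | ∀ col : Finset (Fin N) → Bool, hasPath k n col true ∨ hasPath k m col false}

/-- Ramsey number `R(P^k_n, C^k_m)`. -/
noncomputable def ramseyPC (k n m : ℕ) : ℕ :=
  sInf {N | ∀ col : Finset (Fin N) → Bool, hasPath k n col true ∨ hasCycle k m col false}

/-- Ramsey number `R(C^k_n, P^k_m)`. -/
noncomputable def ramseyCP (k n m : ℕ) : ℕ :=
  sInf {N | ∀ col : Finset (Fin N) → Bool, hasCycle k n col true ∨ hasPath k m col false}

/-- Ramsey number `R(C^k_n, C^k_m)`. -/
noncomputable def ramseyCC (k n m : ℕ) : ℕ :=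
  sInf {N | ∀ col : Finset (Fin N) → Bool, hasCycle k n col true ∨ hasCycle k m col false}

/-!
Write `k = c + 1`, so that the branch vertices of a loose path sit at the positions `i * c`.

Lower bounds: on `N < cn + ⌊(q+1)/2⌋` vertices, colour red exactly the edges avoiding a set `W`
of `N - cn` vertices. A red `P_n` needs `cn + 1` vertices outside `W`, while a blue loose path or
cycle with `q` edges has `q ≤ 2 |W|`, since each of its edges meets `W` and each vertex lies on at
most two edges.

Upper bounds: on `R(C_n, C_m)` of the `cn + ⌊(q+1)/2⌋` vertices there is a red `C_n` or a blue
`C_m` (which contains a blue `P_{m-1}`; for `n = m` swap the colours). If the red cycle does not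
extend to a red `P_n`, every edge made of an end of a cycle edge `e`, inner vertices of `e` and
vertices off the cycle is blue, as it would prolong the red path `C_n - e`. Alternating the
`⌊(q+1)/2⌋` vertices off the cycle with branch vertices of the cycle along `q` consecutive cycle
edges produces such edges, forming a blue `P_q` or `C_q`.
-/

lemma Nat.mul_add_div_of_lt {c j l : ℕ} (hl : l < c) : (j * c + l) / c = j := by
  rw [add_comm, Nat.add_mul_div_right _ _ (by omega), Nat.div_eq_of_lt hl, zero_add]

lemma Nat.mul_add_inj {c j j' l l' : ℕ} (hl : l < c) (hl' : l' < c) (h : j * c + l = j' * c + l') :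
    j = j' ∧ l = l' := by
  constructor
  · simpa [Nat.mul_add_div_of_lt hl, Nat.mul_add_div_of_lt hl'] using congrArg (· / c) h
  · simpa [Nat.mul_add_mod_of_lt hl, Nat.mul_add_mod_of_lt hl'] using congrArg (· % c) h

lemma Nat.exists_eq_mul_add_of_lt_mul {c p m : ℕ} (hc : 0 < c) (hp : p < m * c) :
    ∃ j l, l < c ∧ p = j * c + l ∧ j < m :=
  ⟨p / c, p % c, Nat.mod_lt _ hc, (Nat.div_add_mod' p c).symm,
    Nat.div_lt_of_lt_mul (by rwa [mul_comm])⟩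

lemma Nat.exists_eq_mul_add_of_le_mul {c p q : ℕ} (hc : 0 < c) (hp : p ≤ q * c) :
    ∃ j l, l < c ∧ p = j * c + l ∧ j ≤ q ∧ (0 < l → j < q) := by
  have := Nat.div_add_mod' p c
  refine ⟨p / c, p % c, Nat.mod_lt _ hc, this.symm, Nat.div_le_of_le_mul (by rwa [mul_comm]),
    fun hl => Nat.lt_of_mul_lt_mul_right (a := c) (by omega)⟩

lemma Nat.mem_of_sInf_eq {s : Set ℕ} {v : ℕ} (h : sInf s = v) (hv : 0 < v) : v ∈ s :=
  h ▸ Nat.sInf_mem (Nat.nonempty_of_pos_sInf (h ▸ hv))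

variable {V : Type}

lemma injOn_mod_Ico {M : ℕ} {g : ℕ → V} (hg : Set.InjOn g (Set.Iio M)) (a : ℕ) :
    Set.InjOn (fun p => g (p % M)) (Set.Ico a (a + M)) := by
  intro p ⟨hap, hpa⟩ p' ⟨hap', hpa'⟩ h
  have hM : 0 < M := by omega
  have hmod : p % M = p' % M := hg (Nat.mod_lt _ hM) (Nat.mod_lt _ hM) h
  have : (p - a) % M = (p' - a) % M :=
    Nat.ModEq.add_right_cancel' a (by rwa [Nat.sub_add_cancel hap, Nat.sub_add_cancel hap'])
  rw [Nat.mod_eq_of_lt (by omega), Nat.mod_eq_of_lt (by omega)] at this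
  omega

lemma Finset.exists_injOn_Iio [Nonempty V] {s : Finset V} {t : ℕ} (h : t ≤ #s) :
    ∃ u : ℕ → V, Set.InjOn u (Set.Iio t) ∧ ∀ i < t, u i ∈ s := by
  refine ⟨fun i => if hi : i < #s then (s.equivFin.symm ⟨i, hi⟩ : V) else Classical.arbitrary V,
    fun i hi i' hi' hii' => ?_, fun i hi => ?_⟩
  · simp only [Set.mem_Iio] at hi hi'
    simp only [dif_pos (hi.trans_le h), dif_pos (hi'.trans_le h)] at hii'
    simpa using s.equivFin.symm.injective (Subtype.ext hii')
  · simp [dif_pos (hi.trans_le h)]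

variable [DecidableEq V]

lemma exists_injOn_extend [Fintype V] [Nonempty V] {M t : ℕ} {g : ℕ → V}
    (hg : Set.InjOn g (Set.Iio M)) (h : M + t ≤ Fintype.card V) :
    ∃ Φ : ℕ → V, Set.InjOn Φ (Set.Iio (M + t)) ∧ ∀ p < M, Φ p = g p := by
  have hS : #((range M).image g) = M := by
    rw [card_image_of_injOn (by simpa using hg), card_range]
  obtain ⟨u, hu, hus⟩ := (univ \ (range M).image g).exists_injOn_Iio (t := t)
    (by rw [card_sdiff_of_subset (subset_univ _), card_univ, hS]; omega)
  have hgu : ∀ p < M, ∀ i < t, g p ≠ u i := fun p hp i hi h => by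
    have := hus i hi
    simp only [mem_sdiff, mem_univ, mem_image, mem_range, true_and, not_exists, not_and] at this
    exact this p hp h
  refine ⟨fun p => if p < M then g p else u (p - M), fun p hp p' hp' h => ?_,
    fun p hp => if_pos hp⟩
  simp only [Set.mem_Iio] at hp hp'
  simp only at h
  split_ifs at h with h₁ h₂ h₂
  · exact hg h₁ h₂ h
  · exact absurd h (hgu _ h₁ _ (by omega))
  · exact absurd h.symm (hgu _ h₂ _ (by omega))
  · have := hu (show p - M < t by omega) (show p' - M < t by omega) h
    omega

/-! ### Loose paths and cycles -/

lemma pathEdge_succ (c : ℕ) (f : ℕ → V) (i : ℕ) :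
    pathEdge (c + 1) f i = (range (c + 1)).image fun j => f (i * c + j) := rfl

lemma cycleEdge_eq_pathEdge (c n : ℕ) (g : ℕ → V) (i : ℕ) :
    cycleEdge (c + 1) n g i = pathEdge (c + 1) (fun p => g (p % (n * c))) i := rfl

lemma pathEdge_mod_mod (c n : ℕ) (g : ℕ → V) (i : ℕ) :
    pathEdge (c + 1) (fun p => g (p % (n * c))) (i % n) =
      pathEdge (c + 1) (fun p => g (p % (n * c))) i := by
  simp only [pathEdge_succ]
  refine image_congr fun j _ => ?_
  conv_rhs => rw [← Nat.mod_add_div i n]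
  rw [show (i % n + n * (i / n)) * c + j = i % n * c + j + n * c * (i / n) by ring,
    Nat.add_mul_mod_self_left]

lemma card_pathEdge {c i : ℕ} {f : ℕ → V} (hf : Set.InjOn f (Set.Icc (i * c) (i * c + c))) :
    #(pathEdge (c + 1) f i) = c + 1 := by
  rw [pathEdge_succ, card_image_of_injOn, card_range]
  intro j hj j' hj' h
  simp only [coe_range, Set.mem_Iio] at hj hj'
  have := hf ⟨le_self_add, by omega⟩ ⟨le_self_add, by omega⟩ h
  omega

lemma cycleEdge_comp {W : Type} [DecidableEq W] (k n : ℕ) (φ : V → W) (f : ℕ → V) (i : ℕ) :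
    cycleEdge k n (φ ∘ f) i = (cycleEdge k n f i).image φ := by
  simp only [cycleEdge, image_image]; rfl

lemma hasCycle_of_comap {W : Type} [DecidableEq W] {φ : V → W} (hφ : φ.Injective)
    {col : Finset W → Bool} {k q : ℕ} {b : Bool}
    (h : hasCycle k q (fun e => col (e.image φ)) b) : hasCycle k q col b := by
  obtain ⟨f, hf, hcol⟩ := h
  exact ⟨φ ∘ f, hφ.comp_injOn hf, fun i hi => cycleEdge_comp k q φ f i ▸ hcol i hi⟩

lemma hasCycle_or_hasCycle_of_le {k n m N N' : ℕ} (hN : N ≤ N')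
    (h : ∀ col : Finset (Fin N) → Bool, hasCycle k n col true ∨ hasCycle k m col false)
    (col : Finset (Fin N') → Bool) : hasCycle k n col true ∨ hasCycle k m col false :=
  (h _).imp (hasCycle_of_comap (Fin.castLE_injective hN))
    (hasCycle_of_comap (Fin.castLE_injective hN))

lemma hasPath_not {k q : ℕ} {col : Finset V → Bool} {b : Bool} :
    hasPath k q (fun e => !col e) b ↔ hasPath k q col !b := by
  simp only [hasPath, Bool.not_eq_eq_eq_not]

lemma hasCycle_not {k q : ℕ} {col : Finset V → Bool} {b : Bool} :
    hasCycle k q (fun e => !col e) b ↔ hasCycle k q col !b := by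
  simp only [hasCycle, Bool.not_eq_eq_eq_not]

lemma hasPath_pred_of_hasCycle {c q : ℕ} (hc : 0 < c) {col : Finset V → Bool} {b : Bool}
    (h : hasCycle (c + 1) q col b) : hasPath (c + 1) (q - 1) col b := by
  obtain ⟨g, hg, hcol⟩ := h
  rcases Nat.eq_zero_or_pos q with rfl | hq
  · exact ⟨g, fun a ha b hb _ => by simp_all, by simp⟩
  have hlt : (q - 1) * c + c = q * c := by
    rw [← Nat.succ_mul, Nat.succ_eq_add_one, Nat.sub_add_cancel hq]
  refine ⟨g, hg.mono fun p hp => ?_, fun i hi => ?_⟩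
  · simp only [Set.mem_Iio, Nat.add_sub_cancel] at hp ⊢; omega
  rw [← hcol i (by omega), cycleEdge_eq_pathEdge, pathEdge_succ, pathEdge_succ]
  congr 1
  refine image_congr fun j hj => ?_
  have : (i + 1) * c ≤ (q - 1) * c := Nat.mul_le_mul_right c hi
  simp only [coe_range, Set.mem_Iio, add_mul, one_mul] at hj this
  simp only [Nat.mod_eq_of_lt (by omega : i * c + j < q * c)]

lemma hasPath_succ_of_pendant {c q : ℕ} {col : Finset V → Bool} {b : Bool} {f : ℕ → V}
    (hf : Set.InjOn f (Set.Iio (q * c + 1))) (hcol : ∀ i < q, col (pathEdge (c + 1) f i) = b)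
    {e : Finset V} (he : #e = c + 1) (hend : f (q * c) ∈ e)
    (hdisj : ∀ x ∈ e, x ≠ f (q * c) → ∀ p ≤ q * c, f p ≠ x) (hb : col e = b) :
    hasPath (c + 1) (q + 1) col b := by
  have : Nonempty V := ⟨f 0⟩
  obtain ⟨τ, hτ, hτe⟩ := (e.erase (f (q * c))).exists_injOn_Iio (t := c)
    (by rw [card_erase_of_mem hend, he, Nat.add_sub_cancel])
  set f' : ℕ → V := fun p => if p ≤ q * c then f p else τ (p - (q * c + 1)) with hf'
  have hτf : ∀ i < c, ∀ p ≤ q * c, f p ≠ τ i := fun i hi p hp =>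
    hdisj _ (mem_of_mem_erase (hτe i hi)) (ne_of_mem_erase (hτe i hi)) p hp
  have hinj : Set.InjOn f' (Set.Iio ((q + 1) * c + 1)) := by
    intro p hp p' hp' h
    simp only [Set.mem_Iio, add_mul, one_mul] at hp hp'
    simp only [hf'] at h
    split_ifs at h with h₁ h₂ h₂
    · exact hf (by simpa using Nat.lt_succ_of_le h₁) (by simpa using Nat.lt_succ_of_le h₂) h
    · exact absurd h (hτf _ (by omega) _ h₁)
    · exact absurd h.symm (hτf _ (by omega) _ h₂)
    · have := hτ (by simp; omega) (by simp; omega) h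
      omega
  refine ⟨f', by simpa using hinj, fun i hi => ?_⟩
  rcases Nat.lt_succ_iff_lt_or_eq.mp hi with hi | rfl
  · rw [← hcol i hi, pathEdge_succ, pathEdge_succ]
    congr 1
    refine image_congr fun j hj => ?_
    have : (i + 1) * c ≤ q * c := Nat.mul_le_mul_right c hi
    simp only [coe_range, Set.mem_Iio, add_mul, one_mul] at hj this
    simp only [hf', if_pos (by omega : i * c + j ≤ q * c)]
  · suffices pathEdge (c + 1) f' i = e by rwa [this]
    refine eq_of_subset_of_card_le (fun x hx => ?_) ?_
    · rw [pathEdge_succ] at hx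
      obtain ⟨j, hj, rfl⟩ := mem_image.mp hx
      simp only [hf']
      split_ifs with hji
      · rwa [show j = 0 by omega, add_zero]
      · exact mem_of_mem_erase (hτe _ (by simp at hj; omega))
    · rw [he, card_pathEdge (hinj.mono fun p hp => by simp [add_mul] at hp ⊢; omega)]

lemma pathEdge_add_mul (c a : ℕ) (G : ℕ → V) (i : ℕ) :
    pathEdge (c + 1) (fun p => G (p + a * c)) i = pathEdge (c + 1) G (i + a) := by
  simp only [pathEdge_succ]
  refine image_congr fun j _ => ?_
  ring_nf

lemma pathEdge_mul_sub {c a i : ℕ} (G : ℕ → V) (hi : i < a) :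
    pathEdge (c + 1) (fun p => G (a * c - p)) i = pathEdge (c + 1) G (a - 1 - i) := by
  obtain ⟨r, rfl⟩ : ∃ r, a = i + 1 + r := ⟨a - i - 1, by omega⟩
  rw [pathEdge_succ, pathEdge_succ, show i + 1 + r - 1 - i = r by omega]
  conv_rhs => rw [← range_image_pred_top_sub (c + 1), image_image]
  refine image_congr fun j hj => ?_
  simp only [coe_range, Set.mem_Iio] at hj
  simp only [Function.comp, show (i + 1 + r) * c = i * c + c + r * c by ring]
  congr 1
  omega

lemma exists_path_of_cycle {c n s : ℕ} {col : Finset V → Bool} {b : Bool} {g : ℕ → V} {w : V}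
    (hc : 0 < c) (hg : Set.InjOn g (Set.Iio (n * c)))
    (hcol : ∀ i < n, col (cycleEdge (c + 1) n g i) = b) (hs : s < n)
    (hw : w = g (s * c) ∨ w = g ((s + 1) * c % (n * c))) :
    ∃ f : ℕ → V, Set.InjOn f (Set.Iio ((n - 1) * c + 1)) ∧
      (∀ i < n - 1, col (pathEdge (c + 1) f i) = b) ∧ f ((n - 1) * c) = w ∧
      ∀ p ≤ (n - 1) * c, ∃ p' ∈ Set.Icc ((s + 1) * c) (s * c + n * c), f p = g (p' % (n * c)) := by
  set G : ℕ → V := fun p => g (p % (n * c)) with hG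
  have hGcol : ∀ i, col (pathEdge (c + 1) G i) = b := fun i => by
    rw [← pathEdge_mod_mod]; exact hcol _ (Nat.mod_lt _ (by omega))
  obtain ⟨d, rfl⟩ : ∃ d, n = d + 1 := ⟨n - 1, by omega⟩
  simp only [Nat.add_sub_cancel] at *
  have hA : s * c + (d + 1) * c = (s + 1) * c + d * c := by ring
  have hGinj : Set.InjOn G (Set.Icc ((s + 1) * c) (s * c + (d + 1) * c)) :=
    (injOn_mod_Ico hg ((s + 1) * c)).mono (Set.Icc_subset_Ico_right (by
      simp only [add_mul, one_mul]; omega))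
  -- the cycle minus its `s`-th edge, read from `g ((s+1)c)` to `g (sc)` or backwards
  suffices ∃ σ : ℕ → ℕ, Set.InjOn σ (Set.Iio (d * c + 1)) ∧
      Set.MapsTo σ (Set.Iio (d * c + 1)) (Set.Icc ((s + 1) * c) (s * c + (d + 1) * c)) ∧
      (∀ i < d, ∃ i', pathEdge (c + 1) (G ∘ σ) i = pathEdge (c + 1) G i') ∧ G (σ (d * c)) = w by
    obtain ⟨σ, hσ, hσmaps, hedge, hend⟩ := this
    refine ⟨G ∘ σ, hGinj.comp hσ hσmaps, fun i hi => ?_, hend, fun p hp => ?_⟩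
    · obtain ⟨i', hi'⟩ := hedge i hi
      rw [hi', hGcol]
    · exact ⟨σ p, hσmaps (Nat.lt_succ_of_le hp), rfl⟩
  have hsM : s * c < (d + 1) * c := Nat.mul_lt_mul_of_pos_right hs hc
  rcases hw with rfl | rfl
  · refine ⟨fun p => p + (s + 1) * c, fun p _ p' _ h => by simpa using h, fun p hp => ?_,
      fun i _ => ⟨i + (s + 1), pathEdge_add_mul c (s + 1) G i⟩, ?_⟩
    · simp only [Set.mem_Iio, Set.mem_Icc] at hp ⊢; omega
    · simp only [hG, show d * c + (s + 1) * c = s * c + (d + 1) * c by ring,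
        Nat.add_mod_right, Nat.mod_eq_of_lt hsM]
  · have hA' : (s + d + 1) * c = s * c + (d + 1) * c := by ring
    refine ⟨fun p => (s + d + 1) * c - p, fun p hp p' hp' h => ?_, fun p hp => ?_,
      fun i hi => ⟨s + d + 1 - 1 - i, pathEdge_mul_sub G (by omega)⟩, ?_⟩
    · simp only [Set.mem_Iio] at hp hp' h; omega
    · simp only [Set.mem_Iio, Set.mem_Icc] at hp ⊢; omega
    · simp only [hG, hA', hA, Nat.add_sub_cancel]

/-! ### The lower bound colouring -/

def avoiding (W e : Finset V) : Bool := decide (Disjoint e W)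

lemma exists_mem_pathEdge {c n p : ℕ} (hn : 0 < n) (hp : p ≤ n * c) :
    ∃ i < n, ∃ j ≤ c, p = i * c + j := by
  rcases hp.lt_or_eq with hp | rfl
  · obtain ⟨i, j, hj, rfl, hi⟩ :=
      Nat.exists_eq_mul_add_of_lt_mul (Nat.pos_of_ne_zero (by rintro rfl; simp at hp)) hp
    exact ⟨i, hi, j, hj.le, rfl⟩
  · exact ⟨n - 1, by omega, c, le_rfl, by rw [← Nat.succ_pred_eq_of_pos hn, Nat.succ_mul]; simp⟩

lemma card_add_le_of_hasPath_avoiding [Fintype V] {c n : ℕ} {W : Finset V} (hn : 0 < n)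
    (h : hasPath (c + 1) n (avoiding W) true) : n * c + 1 + #W ≤ Fintype.card V := by
  obtain ⟨f, hf, hred⟩ := h
  rw [Nat.add_sub_cancel] at hf
  have hsub : (range (n * c + 1)).image f ⊆ univ \ W := fun x hx => by
    obtain ⟨p, hp, rfl⟩ := mem_image.mp hx
    obtain ⟨i, hi, j, hj, rfl⟩ := exists_mem_pathEdge hn (Nat.lt_succ_iff.mp (mem_range.mp hp))
    have : Disjoint (pathEdge (c + 1) f i) W := of_decide_eq_true (hred i hi)
    exact mem_sdiff.mpr ⟨mem_univ _, this.notMem_of_mem_left_finset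
      (mem_image.mpr ⟨j, mem_range.mpr (by omega), rfl⟩)⟩
  have := card_le_card hsub
  rw [card_image_of_injOn (by simpa using hf), card_range, card_sdiff_of_subset (subset_univ _),
    card_univ] at this
  have := card_le_univ W
  omega

-- A vertex lies on at most two edges, and on at most one of them as its first vertex.
lemma le_two_mul_card_of_not_disjoint {c q : ℕ} {F : ℕ → V} {W : Finset V} (hc : 0 < c)
    (hF₁ : Set.InjOn F (Set.Iio (q * c))) (hF₂ : Set.InjOn F (Set.Ioc 0 (q * c)))
    (hW : ∀ i < q, ¬ Disjoint (pathEdge (c + 1) F i) W) : q ≤ 2 * #W := by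
  have : ∀ i, ∃ j ≤ c, i < q → F (i * c + j) ∈ W := fun i => by
    by_cases hi : i < q
    · obtain ⟨x, hx, hxW⟩ := not_disjoint_iff.mp (hW i hi)
      obtain ⟨j, hj, rfl⟩ := mem_image.mp hx
      exact ⟨j, by simp at hj; omega, fun _ => hxW⟩
    · exact ⟨0, Nat.zero_le _, fun h => absurd h hi⟩
  choose J hJc hJW using this
  have hiq : ∀ i < q, i * c + c ≤ q * c := fun i hi => by
    simpa [add_mul] using Nat.mul_le_mul_right c hi
  calc q = #(range q) := (card_range q).symm
    _ ≤ #(W ×ˢ (univ : Finset Bool)) := by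
      refine card_le_card_of_injOn (fun i => (F (i * c + J i), decide (J i = 0)))
        (fun i hi => mem_product.mpr ⟨hJW i (mem_range.mp hi), mem_univ _⟩) fun i hi i' hi' h => ?_
      simp only [coe_range, Set.mem_Iio, Prod.mk.injEq, decide_eq_decide] at hi hi' h
      have := hiq i hi
      have := hiq i' hi'
      have := hJc i
      have := hJc i'
      by_cases h0 : J i = 0
      · have h0' := h.2.mp h0
        rw [h0, h0'] at h
        have := hF₁ (show i * c + 0 < q * c by omega) (show i' * c + 0 < q * c by omega) h.1
        exact (Nat.mul_add_inj hc hc this).1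
      · have h0' : J i' ≠ 0 := fun h' => h0 (h.2.mpr h')
        have := hF₂ (show i * c + J i ∈ Set.Ioc 0 (q * c) by constructor <;> omega)
          (show i' * c + J i' ∈ Set.Ioc 0 (q * c) by constructor <;> omega) h.1
        exact (Nat.mul_add_inj (c := c) (j := i) (j' := i') (l := J i - 1) (l' := J i' - 1)
          (by omega) (by omega) (by omega)).1
    _ = 2 * #W := by rw [card_product, card_univ, Fintype.card_bool, mul_comm]

lemma le_two_mul_card_of_hasPath_avoiding {c q : ℕ} {W : Finset V} (hc : 0 < c)
    (h : hasPath (c + 1) q (avoiding W) false) : q ≤ 2 * #W := by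
  obtain ⟨f, hf, hblue⟩ := h
  rw [Nat.add_sub_cancel] at hf
  refine le_two_mul_card_of_not_disjoint hc (hf.mono fun p hp => ?_) (hf.mono fun p hp => ?_)
    fun i hi => of_decide_eq_false (hblue i hi)
  · simp only [Set.mem_Iio] at hp ⊢; omega
  · simp only [Set.mem_Ioc, Set.mem_Iio] at hp ⊢; omega

lemma le_two_mul_card_of_hasCycle_avoiding {c q : ℕ} {W : Finset V} (hc : 0 < c)
    (h : hasCycle (c + 1) q (avoiding W) false) : q ≤ 2 * #W := by
  obtain ⟨g, hg, hblue⟩ := h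
  rw [Nat.add_sub_cancel] at hg
  refine le_two_mul_card_of_not_disjoint hc ((injOn_mod_Ico hg 0).mono fun p hp => ?_)
    ((injOn_mod_Ico hg 1).mono fun p hp => ?_) fun i hi => of_decide_eq_false (hblue i hi)
  · simp only [Set.mem_Ico, Set.mem_Iio] at hp ⊢; omega
  · simp only [Set.mem_Ico, Set.mem_Ioc] at hp ⊢; omega

lemma exists_coloring_of_lt {c n q N : ℕ} (hc : 0 < c) (hn : 0 < n) (hq : 0 < q)
    (hN : N < c * n + (q + 1) / 2) :
    ∃ col : Finset (Fin N) → Bool, ¬ hasPath (c + 1) n col true ∧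
      ¬ hasPath (c + 1) q col false ∧ ¬ hasCycle (c + 1) q col false := by
  obtain ⟨W, -, hW⟩ := exists_subset_card_eq (s := (univ : Finset (Fin N))) (n := N - c * n)
    (by simp)
  refine ⟨avoiding W, fun h => ?_, fun h => ?_, fun h => ?_⟩
  · have := card_add_le_of_hasPath_avoiding hn h
    rw [Fintype.card_fin, hW, mul_comm] at this
    omega
  · have := le_two_mul_card_of_hasPath_avoiding hc h
    omega
  · have := le_two_mul_card_of_hasCycle_avoiding hc h
    omega

/-! ### Edges forced blue by a red cycle -/

-- A red `e` would prolong the red path left by deleting the `s`-th edge of the cycle.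
lemma col_eq_false_of_pendant {c n s : ℕ} {col : Finset V → Bool} {g : ℕ → V} {w : V}
    {e : Finset V} (hc : 0 < c) (hg : Set.InjOn g (Set.Iio (n * c)))
    (hred : ∀ i < n, col (cycleEdge (c + 1) n g i) = true) (hnop : ¬ hasPath (c + 1) n col true)
    (hs : s < n) (hw : w = g (s * c) ∨ s + 1 < n ∧ w = g ((s + 1) * c)) (hwe : w ∈ e)
    (he : #e = c + 1)
    (hrest : ∀ x ∈ e, x = w ∨ (∃ l, 0 < l ∧ l < c ∧ x = g (s * c + l)) ∨ ∀ p < n * c, g p ≠ x) :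
    col e = false := by
  have hsc : s * c + c ≤ n * c := by simpa [add_mul] using Nat.mul_le_mul_right c hs
  obtain ⟨f, hf, hfcol, hfw, hfg⟩ := exists_path_of_cycle hc hg hred hs (hw.imp_right fun h => by
    rw [Nat.mod_eq_of_lt (by simpa [add_mul] using Nat.mul_lt_mul_of_pos_right h.1 hc)]; exact h.2)
  by_contra hb
  apply hnop
  rw [← Nat.sub_add_cancel (by omega : 1 ≤ n)]
  refine hasPath_succ_of_pendant hf hfcol he (hfw ▸ hwe) (fun x hx hxw p hp hfx => ?_)
    (Bool.not_eq_false _ ▸ hb)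
  obtain ⟨p', ⟨hp'₁, hp'₂⟩, hfp⟩ := hfg p hp
  have hxp : x = g (p' % (n * c)) := hfx.symm.trans hfp
  rcases hrest x hx with rfl | ⟨l, hl0, hlc, rfl⟩ | hout
  · exact hxw hfw.symm
  · -- `g (sc + l)` is an inner vertex of the deleted edge, so it is not on the path
    rw [add_mul, one_mul] at hp'₁
    have hl : s * c + l < n * c := by omega
    have := injOn_mod_Ico hg (s * c + 1) (show s * c + l ∈ Set.Ico _ _ from ⟨by omega, by omega⟩)
      (show p' ∈ Set.Ico _ _ from ⟨by omega, by omega⟩) (by simpa only [Nat.mod_eq_of_lt hl])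
    omega
  · exact hout _ (Nat.mod_lt _ (by omega)) hxp.symm

-- `ι 0, …, ι c` index the vertices of an edge through an end of the `s`-th edge of the red cycle
-- whose other vertices are inner vertices of that edge or have an index `≥ nc`, i.e. lie off
-- the cycle.
def IsPendantEdge (c n s : ℕ) (ι : ℕ → ℕ) : Prop :=
  ∃ a, (a = s * c ∨ s + 1 < n ∧ a = (s + 1) * c) ∧ (∃ l ≤ c, ι l = a) ∧
    ∀ l ≤ c, ι l = a ∨ (∃ l', 0 < l' ∧ l' < c ∧ ι l = s * c + l') ∨ n * c ≤ ι l

lemma col_eq_false_of_isPendantEdge {c n t s : ℕ} {col : Finset V → Bool} {g Φ : ℕ → V}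
    (hc : 0 < c) (hg : Set.InjOn g (Set.Iio (n * c)))
    (hred : ∀ i < n, col (cycleEdge (c + 1) n g i) = true) (hnop : ¬ hasPath (c + 1) n col true)
    (hΦ : Set.InjOn Φ (Set.Iio (n * c + t))) (hΦg : ∀ p < n * c, Φ p = g p)
    {ι : ℕ → ℕ} (hι : Set.InjOn ι (Set.Iic c)) (hιlt : ∀ l ≤ c, ι l < n * c + t)
    (hs : s < n) (hpend : IsPendantEdge c n s ι) :
    col ((range (c + 1)).image (Φ ∘ ι)) = false := by
  obtain ⟨a, ha, ⟨l₀, hl₀, hι₀⟩, hrest⟩ := hpend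
  have hsc : s * c + c ≤ n * c := by simpa [add_mul] using Nat.mul_le_mul_right c hs
  have ha_lt : a < n * c := by
    rcases ha with rfl | ⟨h, rfl⟩
    · omega
    · simpa [add_mul] using Nat.mul_lt_mul_of_pos_right h hc
  refine col_eq_false_of_pendant hc hg hred hnop hs (w := Φ a) ?_ ?_ ?_ ?_
  · rw [hΦg a ha_lt]
    exact ha.imp (congrArg g) (And.imp_right (congrArg g))
  · exact mem_image.mpr ⟨l₀, mem_range.mpr (by omega), by simp [hι₀]⟩
  · rw [card_image_of_injOn, card_range]
    exact hΦ.comp (hι.mono fun l hl => by simp at hl ⊢; omega)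
      fun l hl => hιlt l (by simp at hl; omega)
  · simp only [forall_mem_image, mem_range, Function.comp]
    intro l hl
    rcases hrest l (by omega) with h | ⟨l', hl', hl'c, h⟩ | h
    · exact Or.inl (by rw [h])
    · exact Or.inr (Or.inl ⟨l', hl', hl'c, by rw [h, hΦg _ (by omega)]⟩)
    · refine Or.inr (Or.inr fun p hp hgp => ?_)
      rw [← hΦg p hp] at hgp
      have := hΦ (show p < n * c + t by omega) (hιlt l (by omega)) hgp
      omega

/-! ### A blue path -/

/-- The index of the `j`-th branch vertex of the blue path: a vertex off the red cycle (index
`≥ nc`) for odd `j`, and the branch vertex `g (jc)` of the red cycle for even `j`, except that the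
last one is `g ((q-1)c)` when `q` is even (`g (qc)` may be `g 0`, which is already used). -/
def bluePathJoint (c n q j : ℕ) : ℕ :=
  if j % 2 = 1 then n * c + j / 2 else if j = q then (q - 1) * c else j * c

def bluePathIndex (c n q p : ℕ) : ℕ :=
  if p % c = 0 then bluePathJoint c n q (p / c) else p

lemma bluePathIndex_mul_add {c n q j l : ℕ} (hl : l < c) :
    bluePathIndex c n q (j * c + l) = if l = 0 then bluePathJoint c n q j else j * c + l := by
  simp only [bluePathIndex, Nat.mul_add_mod_of_lt hl, Nat.mul_add_div_of_lt hl]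

lemma bluePathIndex_edge {c n q j l : ℕ} (hc : 0 < c) (hl : l ≤ c) :
    bluePathIndex c n q (j * c + l) =
      if l = 0 then bluePathJoint c n q j else if l = c then bluePathJoint c n q (j + 1)
      else j * c + l := by
  rcases hl.lt_or_eq with hl | rfl
  · rw [bluePathIndex_mul_add hl, if_neg hl.ne]
  · rw [show j * l + l = (j + 1) * l + 0 by ring, bluePathIndex_mul_add hc, if_pos rfl,
      if_neg hc.ne', if_pos rfl]

lemma bluePathJoint_injOn {c n q : ℕ} (hc : 0 < c) (hq : 0 < q) (hqn : q ≤ n) :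
    Set.InjOn (bluePathJoint c n q) (Set.Iic q) := by
  intro j hj j' hj' h
  simp only [Set.mem_Iic] at hj hj'
  have hlt : ∀ i < n, i * c < n * c := fun i hi => Nat.mul_lt_mul_of_pos_right hi hc
  have hq' : (q - 1) * c < n * c := hlt _ (by omega)
  simp only [bluePathJoint] at h
  split_ifs at h
  all_goals first
    | omega
    | (have := hlt j' (by omega); omega)
    | (have := hlt j (by omega); omega)
    | (have := Nat.eq_of_mul_eq_mul_right hc h; omega)

lemma bluePathJoint_lt {c n q j : ℕ} (hc : 0 < c) (hq : 0 < q) (hqn : q ≤ n) (hj : j ≤ q) :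
    bluePathJoint c n q j < n * c + (q + 1) / 2 := by
  have hlt : ∀ i < n, i * c < n * c := fun i hi => Nat.mul_lt_mul_of_pos_right hi hc
  unfold bluePathJoint
  split_ifs with h₁ h₂
  · omega
  · have := hlt (q - 1) (by omega); omega
  · have := hlt j (by omega); omega

lemma bluePathJoint_ne_mul_add {c n q j i l : ℕ} (hi : i < n) (hl : 0 < l) (hlc : l < c) :
    bluePathJoint c n q j ≠ i * c + l := by
  have : i * c + c ≤ n * c := by simpa [add_mul] using Nat.mul_le_mul_right c hi
  unfold bluePathJoint
  split_ifs <;> intro h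
  · omega
  all_goals
    have := congrArg (· % c) h
    simp only [Nat.mul_mod_left, Nat.mul_add_mod_of_lt hlc] at this
    omega

lemma bluePathIndex_injOn {c n q : ℕ} (hc : 0 < c) (hq : 0 < q) (hqn : q ≤ n) :
    Set.InjOn (bluePathIndex c n q) (Set.Iio (q * c + 1)) := by
  intro p hp p' hp' h
  obtain ⟨j, l, hl, rfl, hjq, hjq'⟩ := Nat.exists_eq_mul_add_of_le_mul hc (Nat.lt_succ_iff.mp hp)
  obtain ⟨j', l', hl', rfl, hj'q, hj'q'⟩ :=
    Nat.exists_eq_mul_add_of_le_mul hc (Nat.lt_succ_iff.mp hp')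
  rw [bluePathIndex_mul_add hl, bluePathIndex_mul_add hl'] at h
  split_ifs at h with hl0 hl0'
  · rw [hl0, hl0', bluePathJoint_injOn hc hq hqn hjq hj'q h]
  · exact absurd h (bluePathJoint_ne_mul_add (by omega) (by omega) hl')
  · exact absurd h.symm (bluePathJoint_ne_mul_add (by omega) (by omega) hl)
  · exact h

lemma bluePathIndex_lt {c n q p : ℕ} (hc : 0 < c) (hq : 0 < q) (hqn : q ≤ n)
    (hp : p < q * c + 1) :
    bluePathIndex c n q p < n * c + (q + 1) / 2 := by
  obtain ⟨j, l, hl, rfl, hjq, hjq'⟩ := Nat.exists_eq_mul_add_of_le_mul hc (Nat.lt_succ_iff.mp hp)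
  rw [bluePathIndex_mul_add hl]
  split_ifs with hl0
  · exact bluePathJoint_lt hc hq hqn hjq
  · have h₁ := Nat.mul_le_mul_right c (hjq' (by omega))
    have h₂ := Nat.mul_le_mul_right c hqn
    rw [Nat.succ_mul] at h₁
    omega

lemma bluePathIndex_isPendantEdge {c n q j : ℕ} (hc : 0 < c) (hj : j < q) (hqn : q ≤ n) :
    IsPendantEdge c n j fun l => bluePathIndex c n q (j * c + l) := by
  have hι := fun l (hl : l ≤ c) => bluePathIndex_edge (n := n) (q := q) (j := j) hc hl
  have hJodd : ∀ i, i % 2 = 1 → n * c ≤ bluePathJoint c n q i := fun i hi => by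
    rw [bluePathJoint, if_pos hi]; omega
  rcases Nat.mod_two_eq_zero_or_one j with hje | hjo
  · have hJ : bluePathJoint c n q j = j * c := by
      rw [bluePathJoint, if_neg (by omega), if_neg hj.ne]
    refine ⟨_, Or.inl rfl, ⟨0, by omega, by simpa [hJ] using hι 0 (by omega)⟩, fun l hl => ?_⟩
    dsimp only
    rw [hι l hl]
    split_ifs with h₀ h₁
    · exact Or.inl hJ
    · exact Or.inr (Or.inr (hJodd _ (by omega)))
    · exact Or.inr (Or.inl ⟨l, by omega, by omega, rfl⟩)
  · obtain ⟨a, ha, hJ⟩ : ∃ a, (a = j * c ∨ j + 1 < n ∧ a = (j + 1) * c) ∧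
        bluePathJoint c n q (j + 1) = a := by
      rw [bluePathJoint, if_neg (by omega)]
      split_ifs with h
      · exact ⟨_, Or.inl (by rw [← h, Nat.add_sub_cancel]), rfl⟩
      · exact ⟨_, Or.inr ⟨by omega, rfl⟩, rfl⟩
    refine ⟨a, ha, ⟨c, le_rfl, by simpa [hc.ne', hJ] using hι c le_rfl⟩, fun l hl => ?_⟩
    dsimp only
    rw [hι l hl]
    split_ifs with h₀ h₁
    · exact Or.inr (Or.inr (hJodd _ hjo))
    · exact Or.inl hJ
    · exact Or.inr (Or.inl ⟨l, by omega, by omega, rfl⟩)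

lemma hasPath_or_hasPath_of_hasCycle [Fintype V] {c n q : ℕ} {col : Finset V → Bool}
    (hc : 0 < c) (hq : 0 < q) (hqn : q ≤ n) (hV : n * c + (q + 1) / 2 ≤ Fintype.card V)
    (hcyc : hasCycle (c + 1) n col true) :
    hasPath (c + 1) n col true ∨ hasPath (c + 1) q col false := by
  obtain ⟨g, hg, hred⟩ := hcyc
  rw [Nat.add_sub_cancel] at hg
  by_cases hnop : hasPath (c + 1) n col true
  · exact Or.inl hnop
  have : Nonempty V := ⟨g 0⟩
  obtain ⟨Φ, hΦ, hΦg⟩ := exists_injOn_extend hg hV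
  have hidx := bluePathIndex_injOn hc hq hqn
  refine Or.inr ⟨Φ ∘ bluePathIndex c n q, ?_, fun j hj => ?_⟩
  · rw [Nat.add_sub_cancel]
    exact hΦ.comp hidx fun p hp => bluePathIndex_lt hc hq hqn hp
  have hedge : ∀ l ≤ c, j * c + l < q * c + 1 := fun l hl => by
    have := Nat.mul_le_mul_right c hj
    rw [Nat.succ_mul] at this
    omega
  exact col_eq_false_of_isPendantEdge hc hg hred hnop hΦ hΦg
    (fun l hl l' hl' h => by simpa using hidx (hedge l hl) (hedge l' hl') h)
    (fun l hl => bluePathIndex_lt hc hq hqn (hedge l hl)) (hj.trans_le hqn)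
    (bluePathIndex_isPendantEdge hc hj hqn)

/-! ### A blue cycle -/

def blueCycleJoint (c n j : ℕ) : ℕ :=
  if j % 2 = 0 then n * c + j / 2 else j * c

/-- For odd `m` the branch vertices `m - 1` and `0` of the blue cycle both lie off the red cycle, so
the last inner vertex of its last edge is replaced by the branch vertex `g ((m-1)c)` of the red
cycle, which the blue cycle does not use otherwise. -/
def blueCycleIndex (c n m p : ℕ) : ℕ :=
  if p % c = 0 then blueCycleJoint c n (p / c)
  else if m % 2 = 1 ∧ p = (m - 1) * c + (c - 1) then (m - 1) * c else p

lemma blueCycleIndex_mul_add {c n m j l : ℕ} (hl : l < c) :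
    blueCycleIndex c n m (j * c + l) = if l = 0 then blueCycleJoint c n j
      else if m % 2 = 1 ∧ j + 1 = m ∧ l + 1 = c then (m - 1) * c else j * c + l := by
  simp only [blueCycleIndex, Nat.mul_add_mod_of_lt hl, Nat.mul_add_div_of_lt hl]
  have : m % 2 = 1 ∧ j * c + l = (m - 1) * c + (c - 1) ↔ m % 2 = 1 ∧ j + 1 = m ∧ l + 1 = c := by
    refine and_congr_right fun hm => ⟨fun h => ?_, fun ⟨hj, hl'⟩ => ?_⟩
    · have := Nat.mul_add_inj hl (by omega) h
      omega
    · rw [← hj, ← hl', Nat.add_sub_cancel, Nat.add_sub_cancel]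
  simp only [this]

lemma blueCycleIndex_injOn {c n m : ℕ} (hc : 0 < c) (hmn : m ≤ n) :
    Set.InjOn (blueCycleIndex c n m) (Set.Iio (m * c)) := by
  intro p hp p' hp' h
  obtain ⟨j, l, hl, rfl, hj⟩ := Nat.exists_eq_mul_add_of_lt_mul hc hp
  obtain ⟨j', l', hl', rfl, hj'⟩ := Nat.exists_eq_mul_add_of_lt_mul hc hp'
  have hjn := Nat.mul_le_mul_right c (show j + 1 ≤ n by omega)
  have hj'n := Nat.mul_le_mul_right c (show j' + 1 ≤ n by omega)
  have hmn' := Nat.mul_le_mul_right c (show m - 1 + 1 ≤ n by omega)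
  simp only [add_mul, one_mul] at hjn hj'n hmn'
  rw [blueCycleIndex_mul_add hl, blueCycleIndex_mul_add hl'] at h
  simp only [blueCycleJoint] at h
  split_ifs at h
  all_goals first
    | omega
    | (obtain ⟨rfl, _⟩ := Nat.mul_add_inj (l := 0) (l' := 0) hc hc h; omega)
    | (obtain ⟨_, _⟩ := Nat.mul_add_inj (l := 0) (l' := 0) hc hc h; omega)
    | (obtain ⟨_, _⟩ := Nat.mul_add_inj (l := 0) hc hl' h; omega)
    | (obtain ⟨_, _⟩ := Nat.mul_add_inj (l' := 0) hl hc h; omega)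
    | (obtain rfl : j = j' := by omega
       obtain rfl : l = l' := by omega
       rfl)

lemma blueCycleIndex_lt {c n m p : ℕ} (hc : 0 < c) (hmn : m ≤ n) (hp : p < m * c) :
    blueCycleIndex c n m p < n * c + (m + 1) / 2 := by
  obtain ⟨j, l, hl, rfl, hj⟩ := Nat.exists_eq_mul_add_of_lt_mul hc hp
  have hjn := Nat.mul_le_mul_right c (show j + 1 ≤ n by omega)
  have hmn' := Nat.mul_le_mul_right c (show m - 1 + 1 ≤ n by omega)
  simp only [add_mul, one_mul] at hjn hmn'
  rw [blueCycleIndex_mul_add hl, blueCycleJoint]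
  split_ifs <;> omega

lemma blueCycleIndex_edge {c n m j l : ℕ} (hc : 0 < c) (hj : j < m) (hl : l ≤ c) :
    blueCycleIndex c n m ((j * c + l) % (m * c)) =
      if l = c then blueCycleJoint c n ((j + 1) % m) else if l = 0 then blueCycleJoint c n j
      else if m % 2 = 1 ∧ j + 1 = m ∧ l + 1 = c then (m - 1) * c else j * c + l := by
  have hjc : j * c + c ≤ m * c := by simpa [add_mul] using Nat.mul_le_mul_right c hj
  rcases hl.lt_or_eq with hl | rfl
  · rw [Nat.mod_eq_of_lt (by omega), blueCycleIndex_mul_add hl, if_neg hl.ne]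
  · rw [if_pos rfl, show j * l + l = (j + 1) * l by ring, Nat.mul_mod_mul_right,
      ← add_zero ((j + 1) % m * l), blueCycleIndex_mul_add hc, if_pos rfl]

lemma blueCycleIndex_isPendantEdge {c n m j : ℕ} (hc : 2 ≤ c) (hj : j < m) (hmn : m ≤ n) :
    IsPendantEdge c n j fun l => blueCycleIndex c n m ((j * c + l) % (m * c)) := by
  have hι := fun l (hl : l ≤ c) => blueCycleIndex_edge (n := n) (by omega) hj hl
  have hJeven : ∀ i, i % 2 = 0 → n * c ≤ blueCycleJoint c n i := fun i hi => by
    rw [blueCycleJoint, if_pos hi]; omega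
  have hinner : ∀ l, 0 < l → l < c → ∃ l', 0 < l' ∧ l' < c ∧ j * c + l = j * c + l' :=
    fun l h₀ h₁ => ⟨l, h₀, h₁, rfl⟩
  rcases Nat.mod_two_eq_zero_or_one j with hje | hjo
  · by_cases hjm : j + 1 < m
    · have hJ : blueCycleJoint c n ((j + 1) % m) = (j + 1) * c := by
        rw [Nat.mod_eq_of_lt hjm, blueCycleJoint, if_neg (by omega)]
      refine ⟨_, Or.inr ⟨by omega, rfl⟩, ⟨c, le_rfl, by simpa [hJ] using hι c le_rfl⟩,
        fun l hl => ?_⟩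
      dsimp only
      rw [hι l hl]
      split_ifs with h₁ h₂ h₃
      · exact Or.inl hJ
      · exact Or.inr (Or.inr (hJeven _ hje))
      · omega
      · exact Or.inr (Or.inl (hinner l (by omega) (by omega)))
    -- the last edge of an odd cycle: its only branch vertex is the replaced inner vertex
    · have hJ : blueCycleJoint c n ((j + 1) % m) = n * c := by
        rw [show j + 1 = m by omega, Nat.mod_self, blueCycleJoint, if_pos rfl]; rfl
      refine ⟨j * c, Or.inl rfl, ⟨c - 1, by omega, ?_⟩, fun l hl => ?_⟩
      · simpa [show c - 1 ≠ c by omega, show c - 1 ≠ 0 by omega, show m % 2 = 1 by omega,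
          show j + 1 = m by omega, Nat.sub_add_cancel (by omega : 1 ≤ c),
          show m - 1 = j by omega] using hι (c - 1) (by omega)
      dsimp only
      rw [hι l hl]
      split_ifs with h₁ h₂ h₃
      · exact Or.inr (Or.inr hJ.ge)
      · exact Or.inr (Or.inr (hJeven _ hje))
      · exact Or.inl (by rw [show m - 1 = j by omega])
      · exact Or.inr (Or.inl (hinner l (by omega) (by omega)))
  · have hJ : blueCycleJoint c n j = j * c := by rw [blueCycleJoint, if_neg (by omega)]
    refine ⟨j * c, Or.inl rfl,
      ⟨0, by omega, by simpa [show 0 ≠ c by omega, hJ] using hι 0 (by omega)⟩, fun l hl => ?_⟩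
    dsimp only
    rw [hι l hl]
    split_ifs with h₁ h₂ h₃
    · refine Or.inr (Or.inr (hJeven _ ?_))
      rcases Nat.lt_or_ge (j + 1) m with h | h
      · rw [Nat.mod_eq_of_lt h]; omega
      · rw [show j + 1 = m by omega, Nat.mod_self]
    · exact Or.inl hJ
    · omega
    · exact Or.inr (Or.inl (hinner l (by omega) (by omega)))

lemma hasPath_or_hasCycle_of_hasCycle [Fintype V] {c n m : ℕ} {col : Finset V → Bool}
    (hc : 2 ≤ c) (hm : 2 ≤ m) (hmn : m ≤ n) (hV : n * c + (m + 1) / 2 ≤ Fintype.card V)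
    (hcyc : hasCycle (c + 1) n col true) :
    hasPath (c + 1) n col true ∨ hasCycle (c + 1) m col false := by
  obtain ⟨g, hg, hred⟩ := hcyc
  rw [Nat.add_sub_cancel] at hg
  by_cases hnop : hasPath (c + 1) n col true
  · exact Or.inl hnop
  have : Nonempty V := ⟨g 0⟩
  obtain ⟨Φ, hΦ, hΦg⟩ := exists_injOn_extend hg hV
  have hidx := blueCycleIndex_injOn (c := c) (by omega) hmn
  refine Or.inr ⟨Φ ∘ blueCycleIndex c n m, ?_, fun j hj => ?_⟩
  · rw [Nat.add_sub_cancel]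
    exact hΦ.comp hidx fun p hp => blueCycleIndex_lt (c := c) (by omega) hmn hp
  have hcm : c < m * c := by nlinarith
  have hmod : Set.InjOn (fun l => (j * c + l) % (m * c)) (Set.Iic c) := fun l hl l' hl' h => by
    simp only [Set.mem_Iic] at hl hl'
    have := injOn_mod_Ico (g := id) (Set.injOn_id _) (j * c) (show j * c + l ∈ Set.Ico _ _ by
      constructor <;> omega) (show j * c + l' ∈ Set.Ico _ _ by constructor <;> omega) h
    omega
  have hmc : 0 < m * c := by omega
  exact col_eq_false_of_isPendantEdge (c := c) (by omega) hg hred hnop hΦ hΦg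
    (hidx.comp hmod fun l _ => Nat.mod_lt _ hmc)
    (fun l _ => blueCycleIndex_lt (c := c) (by omega) hmn (Nat.mod_lt _ hmc))
    (hj.trans_le hmn) (blueCycleIndex_isPendantEdge hc hj hmn)

/-! ### Ramsey numbers -/

section Ramsey

variable {c n m : ℕ}

lemma ramseyPC_eq (hc : 2 ≤ c) (hm : 2 ≤ m) (hmn : m ≤ n)
    (h : ∀ col : Finset (Fin (c * n + (m - 1) / 2)) → Bool,
      hasCycle (c + 1) n col true ∨ hasCycle (c + 1) m col false) :
    ramseyPC (c + 1) n m = c * n + (m + 1) / 2 := by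
  refine IsLeast.csInf_eq ⟨fun col => ?_, fun N hN => ?_⟩
  · rcases hasCycle_or_hasCycle_of_le (by omega) h col with hr | hb
    · exact hasPath_or_hasCycle_of_hasCycle hc hm hmn (by simp [mul_comm]) hr
    · exact Or.inr hb
  · by_contra! hlt
    obtain ⟨col, hr, -, hb⟩ := exists_coloring_of_lt (by omega) (by omega) (by omega) hlt
    exact (hN col).elim hr hb

lemma ramseyPP_pred_eq (hc : 0 < c) (hm : 2 ≤ m) (hmn : m ≤ n)
    (h : ∀ col : Finset (Fin (c * n + (m - 1) / 2)) → Bool,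
      hasCycle (c + 1) n col true ∨ hasCycle (c + 1) m col false) :
    ramseyPP (c + 1) n (m - 1) = c * n + m / 2 := by
  have hm' : (m - 1 + 1) / 2 = m / 2 := by rw [Nat.sub_add_cancel (by omega)]
  refine IsLeast.csInf_eq ⟨fun col => ?_, fun N hN => ?_⟩
  · rcases hasCycle_or_hasCycle_of_le (by omega) h col with hr | hb
    · exact hasPath_or_hasPath_of_hasCycle hc (by omega) (by omega) (by simp [mul_comm, hm']) hr
    · exact Or.inr (hasPath_pred_of_hasCycle hc hb)
  · by_contra! hlt
    obtain ⟨col, hr, hb, -⟩ := exists_coloring_of_lt (q := m - 1) hc (by omega) (by omega)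
      (by omega : N < c * n + (m - 1 + 1) / 2)
    exact (hN col).elim hr hb

lemma ramseyPP_self_eq (hc : 0 < c) (hn : 2 ≤ n)
    (h : ∀ col : Finset (Fin (c * n + (n - 1) / 2)) → Bool,
      hasCycle (c + 1) n col true ∨ hasCycle (c + 1) n col false) :
    ramseyPP (c + 1) n n = c * n + (n + 1) / 2 := by
  have hV : n * c + (n + 1) / 2 ≤ Fintype.card (Fin (c * n + (n + 1) / 2)) := by simp [mul_comm]
  refine IsLeast.csInf_eq ⟨fun col => ?_, fun N hN => ?_⟩
  · rcases hasCycle_or_hasCycle_of_le (by omega) h col with hr | hb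
    · exact hasPath_or_hasPath_of_hasCycle hc (by omega) le_rfl hV hr
    · have := hasPath_or_hasPath_of_hasCycle (col := fun e => !col e) hc (by omega) le_rfl hV
        (hasCycle_not.mpr hb)
      simpa only [hasPath_not, Bool.not_true, Bool.not_false, or_comm] using this
  · by_contra! hlt
    obtain ⟨col, hr, hb, -⟩ := exists_coloring_of_lt (q := n) hc (by omega) (by omega) hlt
    exact (hN col).elim hr hb

end Ramsey

theorem ramsey_cycle_implies_path_ramsey (k n m : ℕ) (hk : 3 ≤ k) (hm : 2 ≤ m) (hnm : m ≤ n)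
    (h : ramseyCC k n m = (k - 1) * n + (m - 1) / 2) :
    ramseyPC k n m = (k - 1) * n + (m + 1) / 2 ∧
    ramseyPP k n (m - 1) = (k - 1) * n + m / 2 ∧
    (n = m → ramseyPP k n n = (k - 1) * n + (n + 1) / 2) := by
  obtain ⟨c, rfl⟩ : ∃ c, k = c + 1 := ⟨k - 1, by omega⟩
  rw [Nat.add_sub_cancel] at h ⊢
  have hCC := Nat.mem_of_sInf_eq h (Nat.add_pos_left (Nat.mul_pos (by omega) (by omega)) _)
  refine ⟨ramseyPC_eq (by omega) hm hnm hCC, ramseyPP_pred_eq (by omega) hm hnm hCC, ?_⟩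
  rintro rfl
  exact ramseyPP_self_eq (by omega) hm hCC
end

section
/- Let k ≥ 3 and t ≥ 5 be integers, and suppose all k-element subsets of a vertex set of size t(k−1)+1 are colored red or blue with no red copy of the k-uniform loose cycle C^k_t and no blue copy of C^k_3. Then there exist a red k-set e_1 and a blue k-set e_2 with e_1 ∩ e_2 ≠ ∅, and a red k-set f_1 and a blue k-set f_2 with f_1 ∩ f_2 ≠ ∅, such that (e_1 ∪ e_2) ∩ (f_1 ∪ f_2) = ∅. -/
open Finset

/-!
A loose cycle is exhibited as a duplicate-free list of `n(k-1)` vertices read in overlapping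
windows of length `k`.

Red edges meeting a blue edge `β` are cheap: for `x ≠ y` in `β`, disjoint `(k-2)`-sets `S, T`
off `β` and one more vertex `z`, the sets `β`, `{y, z} ∪ S`, `{x, z} ∪ T` would form a blue `C³`,
so one of the last two is red. Given two disjoint blue edges, this yields the two red-blue pairs,
the second one chosen away from the first.

Two disjoint blue edges must exist. Otherwise every `k`-set missing a blue edge `β` is red, so a
red edge `{c, u} ∪ S` leaving `β` extends, through the vertices outside `β`, to a red path that
would close up into a red `C^k_t` unless `{u, v} ∪ β \ {c, c'}` is blue. Trading `β` for this
blue edge shrinks its intersection with a fixed blue edge `b`; a blue edge minimising that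
intersection is then disjoint from `b`, a contradiction.
-/

lemma injOn_getD_of_nodup {α : Type*} {L : List α} (hL : L.Nodup) (d : α) :
    Set.InjOn (L.getD · d) (Set.Iio L.length) := by
  intro i hi j hj hij
  simp only [Set.mem_Iio] at hi hj
  simp only [List.getD_eq_getElem _ _ hi, List.getD_eq_getElem _ _ hj] at hij
  exact (hL.getElem_inj_iff).mp hij

lemma take_append_cons {α : Type*} {P Q : List α} {q : α} {k : ℕ} (hP : P.length + 1 = k) :
    (P ++ q :: Q).take k = P ++ [q] := by
  subst hP
  simp [List.take_append]

lemma mem_of_mem_take_drop {α : Type*} {W X Y : List α} {m n : ℕ} {a : α}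
    (hm : W.length ≤ m) (hmn : m + n ≤ W.length + X.length)
    (ha : a ∈ ((W ++ X ++ Y).drop m).take n) : a ∈ X := by
  rw [List.append_assoc, List.drop_append, List.drop_eq_nil_of_le hm, List.nil_append,
    List.take_drop, List.take_append_of_le_length (by omega)] at ha
  exact List.mem_of_mem_take (List.mem_of_mem_drop ha)

lemma exists_disjoint_subsets_card_eq {α : Type*} [DecidableEq α] {s : Finset α} {m : ℕ}
    (h : 2 * m ≤ s.card) : ∃ S ⊆ s, ∃ T ⊆ s, S.card = m ∧ T.card = m ∧ Disjoint S T := by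
  obtain ⟨S, hSs, hS⟩ := exists_subset_card_eq (show m ≤ s.card by omega)
  obtain ⟨T, hTs, hT⟩ := exists_subset_card_eq (s := s \ S) (n := m)
    (by rw [card_sdiff_of_subset hSs]; omega)
  exact ⟨S, hSs, T, hTs.trans sdiff_subset, hS, hT,
    (disjoint_of_subset_left hTs sdiff_disjoint).symm⟩

section LooseCycle

variable {V : Type} [DecidableEq V]

lemma cycleEdge_eq_pathEdge_s12 {k n i : ℕ} (f : ℕ → V) (hi : i + 1 < n) :
    cycleEdge k n f i = pathEdge k f i := by
  refine image_congr fun j hj => ?_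
  simp only [coe_range, Set.mem_Iio] at hj
  rcases Nat.eq_zero_or_pos (k - 1) with h | h
  · simp only [h, mul_zero, Nat.mod_zero]
  · have : i * (k - 1) + j < n * (k - 1) := by
      have := Nat.mul_le_mul_right (k - 1) (show i + 2 ≤ n by omega)
      have : (i + 2) * (k - 1) = i * (k - 1) + 2 * (k - 1) := by ring
      omega
    simp only [Nat.mod_eq_of_lt this]

lemma cycleEdge_last {k n : ℕ} (f : ℕ → V) (hk : 1 ≤ k) (hn : 1 ≤ n) :
    cycleEdge k n f (n - 1) =
      insert (f 0) ((range (k - 1)).image fun j => f ((n - 1) * (k - 1) + j)) := by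
  obtain ⟨m, rfl⟩ : ∃ m, n = m + 1 := ⟨n - 1, by omega⟩
  obtain ⟨l, rfl⟩ : ∃ l, k = l + 1 := ⟨k - 1, by omega⟩
  simp only [cycleEdge, Nat.add_sub_cancel]
  rw [range_add_one, image_insert, insert_eq, insert_eq]
  congr 1
  · rw [show m * l + l = (m + 1) * l by ring, Nat.mod_self]
  · refine image_congr fun j hj => ?_
    simp only [coe_range, Set.mem_Iio] at hj
    rw [Nat.mod_eq_of_lt (by nlinarith)]

lemma image_range_getD (L : List V) (d : V) {m len : ℕ} (h : m + len ≤ L.length) :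
    (range len).image (fun j => L.getD (m + j) d) = ((L.drop m).take len).toFinset := by
  ext a
  simp only [mem_image, mem_range, List.mem_toFinset, List.mem_iff_getElem, List.length_take,
    List.length_drop, List.getElem_take, List.getElem_drop]
  constructor
  · rintro ⟨j, hj, rfl⟩
    exact ⟨j, by omega, (List.getD_eq_getElem _ _ (by omega)).symm⟩
  · rintro ⟨j, hj, rfl⟩
    exact ⟨j, by omega, List.getD_eq_getElem _ _ _⟩

lemma pathEdge_getD (L : List V) (d : V) {k i : ℕ} (h : i * (k - 1) + k ≤ L.length) :
    pathEdge k (L.getD · d) i = ((L.drop (i * (k - 1))).take k).toFinset :=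
  image_range_getD L d h

lemma cycleEdge_last_getD (L : List V) (d : V) {k n : ℕ} (hk : 1 ≤ k) (hn : 1 ≤ n)
    (hL : L.length = n * (k - 1)) :
    cycleEdge k n (L.getD · d) (n - 1) =
      insert (L.getD 0 d) (L.drop ((n - 1) * (k - 1))).toFinset := by
  have hlast : (n - 1) * (k - 1) + (k - 1) = L.length := by
    rw [hL, ← Nat.succ_mul, Nat.succ_eq_add_one, Nat.sub_add_cancel hn]
  rw [cycleEdge_last _ hk hn, image_range_getD L d hlast.le, List.take_of_length_le]
  simp only [List.length_drop]
  omega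

lemma card_cycleEdge {k n : ℕ} (hkn : k ≤ n * (k - 1)) {f : ℕ → V}
    (hf : Set.InjOn f (Set.Iio (n * (k - 1)))) (i : ℕ) :
    (cycleEdge k n f i).card = k := by
  rw [cycleEdge, card_image_of_injOn, card_range]
  intro j hj j' hj' heq
  simp only [coe_range, Set.mem_Iio] at hj hj'
  have hmod := hf (Set.mem_Iio.mpr (Nat.mod_lt _ (by omega)))
    (Set.mem_Iio.mpr (Nat.mod_lt _ (by omega))) heq
  exact Nat.ModEq.eq_of_lt_of_lt (Nat.ModEq.add_left_cancel' _ hmod) (by omega) (by omega)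

lemma hasCycle_of_nodup {col : Finset V → Bool} {b : Bool} {k n : ℕ} (L : List V) (d : V)
    (hL : L.Nodup) (hlen : L.length = n * (k - 1))
    (hcol : ∀ i < n, col (cycleEdge k n (L.getD · d) i) = b) : hasCycle k n col b :=
  ⟨_, hlen ▸ injOn_getD_of_nodup hL d, hcol⟩

lemma hasCycle_of_forall_card_eq [Fintype V] {col : Finset V → Bool} {b : Bool} {k n : ℕ}
    (hk : 2 ≤ k) (hn : 2 ≤ n) (hV : n * (k - 1) ≤ Fintype.card V)
    (hall : ∀ e : Finset V, e.card = k → col e = b) : hasCycle k n col b := by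
  have hkn : k ≤ n * (k - 1) := by nlinarith [Nat.sub_add_cancel (by omega : 1 ≤ k)]
  obtain ⟨d⟩ : Nonempty V := Fintype.card_pos_iff.mp (by omega)
  set L := (univ : Finset V).toList.take (n * (k - 1))
  have hlen : L.length = n * (k - 1) := by simpa [L] using hV
  have hL : L.Nodup := (nodup_toList _).sublist (List.take_sublist _ _)
  exact hasCycle_of_nodup L d hL hlen fun i _ =>
    hall _ (card_cycleEdge hkn (hlen ▸ injOn_getD_of_nodup hL d) i)

lemma hasCycle_of_nodup_append {col : Finset V → Bool} {b : Bool} {k t : ℕ} (hk : 2 ≤ k)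
    (ht : 3 ≤ t) {u w v : V} {P Q P' : List V}
    (hL : ((u :: P) ++ (w :: Q) ++ (v :: P')).Nodup) (hP : P.length = k - 2)
    (hQ : (w :: Q).length = (t - 2) * (k - 1)) (hP' : P'.length = k - 2)
    (hfirst : col (u :: P ++ [w]).toFinset = b) (hlast : col (u :: v :: P').toFinset = b)
    (hmid : ∀ e : Finset V, e.card = k → e ⊆ (w :: Q ++ [v]).toFinset → col e = b) :
    hasCycle k t col b := by
  set L := (u :: P) ++ (w :: Q) ++ (v :: P')
  have hmul₁ : (t - 2) * (k - 1) + (k - 1) = (t - 1) * (k - 1) := by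
    rw [← add_one_mul, show t - 2 + 1 = t - 1 by omega]
  have hmul₂ : (t - 1) * (k - 1) + (k - 1) = t * (k - 1) := by
    rw [← add_one_mul, Nat.sub_add_cancel (by omega)]
  simp only [List.length_cons] at hQ
  have hlen : L.length = t * (k - 1) := by
    simp only [L, List.length_append, List.length_cons]
    omega
  refine hasCycle_of_nodup L u hL hlen fun i hi => ?_
  rcases (show i = 0 ∨ i = t - 1 ∨ (1 ≤ i ∧ i + 1 < t) by omega) with rfl | rfl | ⟨hi1, hit⟩
  · rw [cycleEdge_eq_pathEdge_s12 _ (by omega), pathEdge_getD _ _ (by omega), zero_mul,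
      List.drop_zero]
    simp only [L, List.append_assoc]
    rwa [List.cons_append (a := w), take_append_cons (by simp only [List.length_cons]; omega)]
  · rw [cycleEdge_last_getD _ _ (by omega) (by omega) hlen,
      List.drop_left' (by simp only [List.length_append, List.length_cons]; omega)]
    simpa [L] using hlast
  · have hkt : k ≤ t * (k - 1) := by nlinarith [Nat.sub_add_cancel (by omega : 1 ≤ k)]
    refine hmid _ (card_cycleEdge hkt (hlen ▸ injOn_getD_of_nodup hL u) i) ?_
    have hik : (i + 1) * (k - 1) ≤ (t - 1) * (k - 1) := Nat.mul_le_mul_right _ (by omega)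
    have hik' : 1 * (k - 1) ≤ i * (k - 1) := Nat.mul_le_mul_right _ hi1
    rw [add_one_mul] at hik
    rw [cycleEdge_eq_pathEdge_s12 _ hit, pathEdge_getD _ _ (by omega),
      show L = (u :: P) ++ (w :: Q ++ [v]) ++ P' by simp [L]]
    intro a ha
    rw [List.mem_toFinset] at ha ⊢
    exact mem_of_mem_take_drop (by simp only [List.length_cons]; omega)
      (by simp only [List.length_cons, List.length_append]; omega) ha

end LooseCycle

lemma col_eq_true_or_of_not_hasCycle_three {V : Type} [DecidableEq V] {col : Finset V → Bool}
    {k : ℕ} (hk : 2 ≤ k) (hnoblue : ¬ hasCycle k 3 col false) {β S T : Finset V} {x y z : V}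
    (hβk : β.card = k) (hβ : col β = false) (hx : x ∈ β) (hy : y ∈ β) (hxy : x ≠ y)
    (hS : S.card = k - 2) (hT : T.card = k - 2) (hSβ : Disjoint S β) (hTβ : Disjoint T β)
    (hST : Disjoint S T) (hz : z ∉ β) (hzS : z ∉ S) (hzT : z ∉ T) :
    col (insert y (insert z S)) = true ∨ col (insert x (insert z T)) = true := by
  by_contra! h
  simp only [ne_eq, Bool.not_eq_true] at h
  have hxE : ((β.erase x).erase y).card = k - 2 := by
    rw [card_erase_of_mem (mem_erase.mpr ⟨hxy.symm, hy⟩), card_erase_of_mem hx, hβk]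
    omega
  have hyzS : (insert y (insert z S)).card = k := by
    have hyz : y ≠ z := fun h => hz (h ▸ hy)
    rw [card_insert_of_notMem (by simp [hyz, disjoint_right.mp hSβ hy]),
      card_insert_of_notMem hzS, hS]
    omega
  refine hnoblue (hasCycle_of_nodup_append hk le_rfl (u := x) (w := y) (v := z)
    (P := ((β.erase x).erase y).toList) (Q := S.toList) (P' := T.toList) ?_
    (by rw [length_toList, hxE]) (by simp only [List.length_cons, length_toList, hS]; omega)
    (by rw [length_toList, hT]) ?_ ?_ fun e he hsub => ?_)
  · simp only [List.nodup_append, List.nodup_cons, nodup_toList, mem_toList, List.mem_cons,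
      List.mem_append]
    grind [disjoint_left]
  · convert hβ using 2
    ext a
    simp only [List.toFinset_cons, List.toFinset_append, toList_toFinset, List.toFinset_nil,
      insert_empty, mem_insert, mem_union, mem_erase, mem_singleton]
    grind
  · convert h.2 using 2
    simp
  · convert h.1 using 2
    refine eq_of_subset_of_card_le (fun a ha => ?_) (by rw [he, hyzS])
    simpa [or_comm, or_left_comm] using hsub ha

lemma exists_red_meeting_blue {V : Type} [DecidableEq V] [Fintype V] {col : Finset V → Bool}
    {k : ℕ} (hk : 2 ≤ k) (hnoblue : ¬ hasCycle k 3 col false) {β X : Finset V}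
    (hβk : β.card = k) (hβ : col β = false) (hβX : Disjoint β X)
    (hV : k + X.card + 2 * (k - 2) + 1 ≤ Fintype.card V) :
    ∃ r : Finset V, r.card = k ∧ col r = true ∧ (r ∩ β).Nonempty ∧ Disjoint r X := by
  set R := (β ∪ X)ᶜ
  have hR : 2 * (k - 2) + 1 ≤ R.card := by
    rw [card_compl, card_union_of_disjoint hβX, hβk]
    omega
  obtain ⟨z, hzR⟩ := card_pos.mp (show 0 < R.card by omega)
  obtain ⟨S, hSR, T, hTR, hS, hT, hST⟩ :=
    exists_disjoint_subsets_card_eq (s := R.erase z) (m := k - 2)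
      (by rw [card_erase_of_mem hzR]; omega)
  have hR_out : ∀ a ∈ R, a ∉ β ∧ a ∉ X := by simp [R]
  have hout : ∀ P ⊆ R.erase z, Disjoint P β ∧ z ∉ P ∧ Disjoint P X := fun P hP =>
    ⟨disjoint_left.mpr fun a ha => (hR_out a (mem_of_mem_erase (hP ha))).1,
      fun hz => (mem_erase.mp (hP hz)).1 rfl,
      disjoint_left.mpr fun a ha => (hR_out a (mem_of_mem_erase (hP ha))).2⟩
  have hred : ∀ w ∈ β, ∀ P ⊆ R.erase z, P.card = k - 2 → col (insert w (insert z P)) = true →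
      ∃ r : Finset V, r.card = k ∧ col r = true ∧ (r ∩ β).Nonempty ∧ Disjoint r X := by
    intro w hw P hP hPk hcol
    obtain ⟨hPβ, hzP, hPX⟩ := hout P hP
    have hwz : w ≠ z := fun h => (hR_out z hzR).1 (h ▸ hw)
    have hwP : w ∉ P := fun h => disjoint_left.mp hPβ h hw
    refine ⟨_, ?_, hcol, ⟨w, mem_inter.mpr ⟨mem_insert_self _ _, hw⟩⟩, ?_⟩
    · rw [card_insert_of_notMem (by simp [hwz, hwP]), card_insert_of_notMem hzP, hPk]
      omega
    · simp only [disjoint_insert_left]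
      exact ⟨disjoint_left.mp hβX hw, (hR_out z hzR).2, hPX⟩
  obtain ⟨x, hx, y, hy, hxy⟩ := one_lt_card.mp (show 1 < β.card by omega)
  obtain ⟨hSβ, hzS, -⟩ := hout S hSR
  obtain ⟨hTβ, hzT, -⟩ := hout T hTR
  rcases col_eq_true_or_of_not_hasCycle_three hk hnoblue hβk hβ hx hy hxy hS hT hSβ hTβ hST
    (hR_out z hzR).1 hzS hzT with h | h
  · exact hred y hy S hSR hS h
  · exact hred x hx T hTR hT h

section NoDisjointBluePair

variable {V : Type} [DecidableEq V] [Fintype V] {col : Finset V → Bool} {k t : ℕ}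

lemma col_insert_insert_eq_false_of_red (hk : 3 ≤ k) (ht : 3 ≤ t)
    (hV : t * (k - 1) + 1 ≤ Fintype.card V) (hnored : ¬ hasCycle k t col true)
    {β : Finset V} (hβk : β.card = k)
    (hβ : ∀ e : Finset V, e.card = k → Disjoint e β → col e = true)
    {c c' u v : V} (hc : c ∈ β) (hc' : c' ∈ β) (hcc' : c ≠ c') (hu : u ∉ β) (hv : v ∉ β)
    (huv : u ≠ v) {S : Finset V} (hS : S.card = k - 2) (hSβ : Disjoint S β) (huS : u ∉ S)
    (hvS : v ∉ S) (hred : col (insert c (insert u S)) = true) :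
    col (insert u (insert v ((β.erase c).erase c'))) = false := by
  by_contra! hblue
  rw [ne_eq, Bool.not_eq_false] at hblue
  obtain ⟨w, hw⟩ := card_pos.mp (show 0 < S.card by omega)
  have hmul : (t - 2) * (k - 1) + 2 * (k - 1) = t * (k - 1) := by
    rw [← add_mul, Nat.sub_add_cancel (by omega)]
  obtain ⟨R, hR, hRcard⟩ := exists_subset_card_eq
    (s := (insert u (insert v (β ∪ S)))ᶜ) (n := (t - 2) * (k - 1) - 1) (by
      rw [card_compl, card_insert_of_notMem (by simp [huv, hu, huS]),
        card_insert_of_notMem (by simp [hv, hvS]), card_union_of_disjoint hSβ.symm, hβk, hS]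
      omega)
  have hR_out : ∀ a ∈ R, a ≠ u ∧ a ≠ v ∧ a ∉ β ∧ a ∉ S := fun a ha => by
    simpa [not_or] using hR ha
  have hcS : c ∉ S := fun h => disjoint_left.mp hSβ h hc
  apply hnored
  -- The red cycle: `u, c, S \ {w}, w`, then through `R` to `v`, then `β \ {c, c'}` back to `u`.
  refine hasCycle_of_nodup_append (by omega) ht (u := u) (w := w) (v := v)
    (P := (insert c (S.erase w)).toList) (Q := R.toList) (P' := ((β.erase c).erase c').toList)
    ?_ ?_ ?_ ?_ ?_ ?_ ?_
  · simp only [List.nodup_append, List.nodup_cons, nodup_toList, mem_toList, List.mem_cons,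
      List.mem_append, mem_insert, mem_erase, and_true, ne_eq]
    have hSβ' := disjoint_left.mp hSβ
    grind
  · rw [length_toList, card_insert_of_notMem (fun h => hcS (mem_of_mem_erase h)),
      card_erase_of_mem hw, hS]
    omega
  · rw [List.length_cons, length_toList, hRcard]
    have : 0 < (t - 2) * (k - 1) := Nat.mul_pos (by omega) (by omega)
    omega
  · rw [length_toList, card_erase_of_mem (mem_erase.mpr ⟨hcc'.symm, hc'⟩),
      card_erase_of_mem hc, hβk]
    omega
  · convert hred using 2
    ext a
    simp only [List.toFinset_cons, List.toFinset_append, toList_toFinset, List.toFinset_nil,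
      insert_empty, mem_insert, mem_union, mem_erase, mem_singleton]
    grind
  · simpa using hblue
  · refine fun e he hsub => hβ e he (disjoint_left.mpr fun a ha haβ => ?_)
    have := hsub ha
    simp only [List.mem_toFinset, List.mem_cons, List.mem_append, mem_toList,
      List.mem_nil_iff, or_false] at this
    rcases this with (rfl | haR) | rfl
    · exact disjoint_left.mp hSβ hw haβ
    · exact (hR_out a haR).2.2.1 haβ
    · exact hv haβ

lemma col_insert_insert_erase_erase_eq_false (hk : 3 ≤ k) (ht : 3 ≤ t)
    (hV : t * (k - 1) + 1 ≤ Fintype.card V) (hnored : ¬ hasCycle k t col true)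
    (hnoblue : ¬ hasCycle k 3 col false) {β : Finset V} (hβk : β.card = k)
    (hβcol : col β = false) (hβ : ∀ e : Finset V, e.card = k → Disjoint e β → col e = true)
    {x y u v : V} (hx : x ∈ β) (hy : y ∈ β) (hxy : x ≠ y) (hu : u ∉ β) (hv : v ∉ β)
    (huv : u ≠ v) :
    col (insert u (insert v ((β.erase x).erase y))) = false := by
  have hmul : 3 * (k - 1) ≤ t * (k - 1) := Nat.mul_le_mul_right _ ht
  obtain ⟨S, hS, T, hT, hScard, hTcard, hST⟩ :=
    exists_disjoint_subsets_card_eq (s := (insert u (insert v β))ᶜ) (m := k - 2) (by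
      rw [card_compl, card_insert_of_notMem (by simp [huv, hu]), card_insert_of_notMem hv, hβk]
      omega)
  have hout : ∀ P ⊆ (insert u (insert v β))ᶜ, Disjoint P β ∧ u ∉ P ∧ v ∉ P := fun P hP =>
    ⟨disjoint_left.mpr fun a ha haβ => mem_compl.mp (hP ha) (by simp [haβ]),
      fun h => mem_compl.mp (hP h) (by simp), fun h => mem_compl.mp (hP h) (by simp)⟩
  obtain ⟨hSβ, huS, hvS⟩ := hout S hS
  obtain ⟨hTβ, huT, hvT⟩ := hout T hT
  rcases col_eq_true_or_of_not_hasCycle_three (by omega) hnoblue hβk hβcol hx hy hxy hScard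
    hTcard hSβ hTβ hST hu huS huT with h | h
  · rw [erase_right_comm]
    exact col_insert_insert_eq_false_of_red hk ht hV hnored hβk hβ hy hx hxy.symm hu hv huv
      hScard hSβ huS hvS h
  · exact col_insert_insert_eq_false_of_red hk ht hV hnored hβk hβ hx hy hxy hu hv huv
      hTcard hTβ huT hvT h

lemma exists_blue_inter_card_lt (hk : 3 ≤ k) (ht : 3 ≤ t)
    (hV : t * (k - 1) + 1 ≤ Fintype.card V) (hnored : ¬ hasCycle k t col true)
    (hnoblue : ¬ hasCycle k 3 col false) {β b : Finset V} (hβk : β.card = k)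
    (hβcol : col β = false) (hβ : ∀ e : Finset V, e.card = k → Disjoint e β → col e = true)
    (hb : b.card = k) (hβb : (β ∩ b).Nonempty) :
    ∃ β' : Finset V, β'.card = k ∧ col β' = false ∧ (β' ∩ b).card < (β ∩ b).card := by
  obtain ⟨w, hw⟩ := hβb
  obtain ⟨hwβ, hwb⟩ := mem_inter.mp hw
  obtain ⟨y, hy⟩ := card_pos.mp (show 0 < (β.erase w).card by rw [card_erase_of_mem hwβ]; omega)
  obtain ⟨hyw, hyβ⟩ := mem_erase.mp hy
  have hmul : 3 * (k - 1) ≤ t * (k - 1) := Nat.mul_le_mul_right _ ht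
  obtain ⟨u, hu, v, hv, huv⟩ := one_lt_card.mp (show 1 < (β ∪ b)ᶜ.card by
    have := card_union_add_card_inter β b
    have := card_pos.mpr ⟨w, hw⟩
    rw [card_compl]
    omega)
  simp only [mem_compl, mem_union, not_or] at hu hv
  set M := (β.erase w).erase y
  have hM : M ⊆ β := (erase_subset _ _).trans (erase_subset _ _)
  have hsub : insert u (insert v M) ∩ b ⊆ (β ∩ b).erase w := by
    intro a ha
    simp only [M, mem_inter, mem_insert, mem_erase] at ha ⊢
    grind
  refine ⟨insert u (insert v M), ?_,
    col_insert_insert_erase_erase_eq_false hk ht hV hnored hnoblue hβk hβcol hβ hwβ hyβ hyw.symm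
      hu.1 hv.1 huv, card_lt_card (hsub.trans_ssubset (erase_ssubset hw))⟩
  rw [card_insert_of_notMem (by simpa [huv] using fun h => hu.1 (hM h)),
    card_insert_of_notMem (fun h => hv.1 (hM h)), card_erase_of_mem hy, card_erase_of_mem hwβ,
    hβk]
  omega

theorem exists_disjoint_blue_pair (hk : 3 ≤ k) (ht : 3 ≤ t)
    (hV : t * (k - 1) + 1 ≤ Fintype.card V) (hnored : ¬ hasCycle k t col true)
    (hnoblue : ¬ hasCycle k 3 col false) :
    ∃ b₁ b₂ : Finset V, b₁.card = k ∧ b₂.card = k ∧ col b₁ = false ∧ col b₂ = false ∧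
      Disjoint b₁ b₂ := by
  by_contra! hno
  have hred : ∀ β : Finset V, β.card = k → col β = false →
      ∀ e : Finset V, e.card = k → Disjoint e β → col e = true := fun β hβk hβ e he heβ => by
    by_contra h
    exact hno e β he hβk (by simpa using h) hβ heβ
  obtain ⟨b, hbk, hb⟩ : ∃ b : Finset V, b.card = k ∧ col b = false := by
    by_contra! hall
    refine hnored (hasCycle_of_forall_card_eq (by omega) (by omega) (by omega) fun e he => ?_)
    simpa using hall e he
  obtain ⟨β, hβ, hmin⟩ := exists_min_image ((powersetCard k univ).filter (col · = false))
    (fun β => (β ∩ b).card) ⟨b, by simp [hbk, hb]⟩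
  simp only [mem_filter, mem_powersetCard, subset_univ, true_and] at hβ hmin
  by_cases hβb : (β ∩ b).Nonempty
  · obtain ⟨β', hβ'k, hβ', hlt⟩ := exists_blue_inter_card_lt hk ht hV hnored hnoblue hβ.1 hβ.2
      (hred β hβ.1 hβ.2) hbk hβb
    exact (hmin β' ⟨hβ'k, hβ'⟩).not_gt hlt
  · exact hno β b hβ.1 hbk hβ.2 hb
      (disjoint_iff_inter_eq_empty.mpr (not_nonempty_iff_eq_empty.mp hβb))

end NoDisjointBluePair

theorem two_disjoint_red_blue_pairs (k t : ℕ) (hk : 3 ≤ k) (ht : 5 ≤ t)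
    (col : Finset (Fin (t * (k - 1) + 1)) → Bool)
    (hnored : ¬ hasCycle k t col true)
    (hnoblue : ¬ hasCycle k 3 col false) :
    ∃ e₁ e₂ f₁ f₂ : Finset (Fin (t * (k - 1) + 1)),
      e₁.card = k ∧ e₂.card = k ∧ f₁.card = k ∧ f₂.card = k ∧
      col e₁ = true ∧ col e₂ = false ∧ col f₁ = true ∧ col f₂ = false ∧
      (e₁ ∩ e₂).Nonempty ∧ (f₁ ∩ f₂).Nonempty ∧
      (e₁ ∪ e₂) ∩ (f₁ ∪ f₂) = ∅ := by
  have hV : Fintype.card (Fin (t * (k - 1) + 1)) = t * (k - 1) + 1 := Fintype.card_fin _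
  have hmul : 5 * (k - 1) ≤ t * (k - 1) := Nat.mul_le_mul_right _ ht
  obtain ⟨b₁, b₂, hb₁k, hb₂k, hb₁, hb₂, hb₁₂⟩ :=
    exists_disjoint_blue_pair hk (by omega) hV.ge hnored hnoblue
  obtain ⟨r₁, hr₁k, hr₁, hr₁b₁, hr₁b₂⟩ :=
    exists_red_meeting_blue (by omega) hnoblue hb₁k hb₁ hb₁₂ (by rw [hV, hb₂k]; omega)
  have hb₁r₁ : (b₁ ∪ r₁).card ≤ 2 * k - 1 := by
    have := card_union_add_card_inter b₁ r₁
    have := card_pos.mpr (inter_comm r₁ b₁ ▸ hr₁b₁)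
    omega
  obtain ⟨r₂, hr₂k, hr₂, hr₂b₂, hr₂b₁r₁⟩ :=
    exists_red_meeting_blue (X := b₁ ∪ r₁) (by omega) hnoblue hb₂k hb₂
      (disjoint_union_right.mpr ⟨hb₁₂.symm, hr₁b₂.symm⟩) (by rw [hV]; omega)
  refine ⟨r₁, b₁, r₂, b₂, hr₁k, hb₁k, hr₂k, hb₂k, hr₁, hb₁, hr₂, hb₂, hr₁b₁, hr₂b₂, ?_⟩
  rw [← disjoint_iff_inter_eq_empty, disjoint_union_right, union_comm]
  exact ⟨hr₂b₁r₁.symm, disjoint_union_left.mpr ⟨hb₁₂, hr₁b₂⟩⟩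
end
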